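/- Let G be a tournament, p a vertex, and suppose there is no arc from N⁺(p) to N⁻(p). Then any union of an FVS of G[N⁻(p)] and an FVS of G[N⁺(p)] is a p-disjoint FVS of G. -/

import Mathlib

open Finset

variable {V : Type*}

/-- A digraph (given by its arc relation) is acyclic if no vertex lies on a directed cycle. -/
def Acyclic (E : V → V → Prop) : Prop := ∀ v, ¬ Relation.TransGen E v v

/-- The digraph obtained by deleting the vertex set `X`. -/
def Delete [DecidableEq V] (E : V → V → Prop) (X : Finset V) : V → V → Prop :=
  fun a b => a ∉ X ∧ b ∉ X ∧ E a b

/-- The subgraph induced on the vertex set `A`. -/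
def Induce [DecidableEq V] (E : V → V → Prop) (A : Finset V) : V → V → Prop :=
  fun a b => a ∈ A ∧ b ∈ A ∧ E a b

/-- `S` is a feedback vertex set of the digraph `E`. -/
def IsFVS [DecidableEq V] (E : V → V → Prop) (S : Finset V) : Prop :=
  Acyclic (Delete E S)

/-- A tournament: no self-loops and exactly one arc between any two distinct vertices. -/
def IsTournament (E : V → V → Prop) : Prop :=
  (∀ v, ¬ E v v) ∧ ∀ u v, u ≠ v → (E u v ↔ ¬ E v u)

/-- Weight of a vertex set. -/
def weight (w : V → ℕ) (S : Finset V) : ℕ := ∑ v ∈ S, w v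

/-- Out-neighborhood. -/
def Nout [Fintype V] [DecidableEq V] (E : V → V → Prop) [DecidableRel E] (p : V) : Finset V :=
  Finset.univ.filter (fun u => E p u)

/-- In-neighborhood. -/
def Nin [Fintype V] [DecidableEq V] (E : V → V → Prop) [DecidableRel E] (p : V) : Finset V :=
  Finset.univ.filter (fun u => E u p)

/-- `S` is a minimum-weight FVS of `(E, w)`. -/
def IsOptFVS [DecidableEq V] (E : V → V → Prop) (w : V → ℕ) (S : Finset V) : Prop :=
  IsFVS E S ∧ ∀ S', IsFVS E S' → weight w S ≤ weight w S'

/-- `S` is a `p`-disjoint FVS of `E`. -/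
def IsPDisjFVS [DecidableEq V] (E : V → V → Prop) (p : V) (S : Finset V) : Prop :=
  IsFVS E S ∧ p ∉ S

/-- `S` is a minimum-weight `p`-disjoint FVS of `(E, w)`. -/
def IsOptPDisjFVS [DecidableEq V] (E : V → V → Prop) (w : V → ℕ) (p : V) (S : Finset V) : Prop :=
  IsPDisjFVS E p S ∧ ∀ S', IsPDisjFVS E p S' → weight w S ≤ weight w S'

/-- `S` is a 2-approximate solution of `(E, w)`. -/
def TwoApproxFVS [DecidableEq V] (E : V → V → Prop) (w : V → ℕ) (S : Finset V) : Prop :=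
  IsFVS E S ∧ ∀ S', IsOptFVS E w S' → weight w S ≤ 2 * weight w S'

/-- `S` is a 2-approximate `p`-disjoint solution of `(E, w)`. -/
def TwoApproxPDisj [DecidableEq V] (E : V → V → Prop) (w : V → ℕ) (p : V) (S : Finset V) : Prop :=
  IsPDisjFVS E p S ∧ ∀ S', IsOptPDisjFVS E w p S' → weight w S ≤ 2 * weight w S'

/-- `l` is a topological sort of the subgraph of `E` induced on the vertex set `A`. -/
def IsTopoOn [DecidableEq V] (E : V → V → Prop) (A : Finset V) (l : List V) : Prop :=
  l.Nodup ∧ (∀ v, v ∈ l ↔ v ∈ A) ∧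
    ∀ (i j : ℕ) (hi : i < l.length) (hj : j < l.length),
      E (l.get ⟨i, hi⟩) (l.get ⟨j, hj⟩) → i < j

/-! Layer the vertices as `N⁻(p) < {p} < N⁺(p)`. In a tournament with no arc from `N⁺(p)` to
`N⁻(p)`, every arc goes weakly upwards, so every cycle of `G - (Sm ∪ Sp)` lies in a single layer:
in `N⁻(p)` it is a cycle of `G[N⁻(p)] - Sm`, in `N⁺(p)` one of `G[N⁺(p)] - Sp`, and `{p}` carries
no loop. -/

theorem Acyclic.mono {E E' : V → V → Prop} (h : ∀ a b, E a b → E' a b) (hE' : Acyclic E') :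
    Acyclic E :=
  fun v hv => hE' v (Relation.TransGen.mono h _ _ hv)

theorem IsTournament.asymm {E : V → V → Prop} (hT : IsTournament E) {a b : V} (hab : E a b) :
    ¬ E b a := by
  rcases eq_or_ne a b with rfl | hne
  · exact hT.1 a
  · exact (hT.2 a b hne).1 hab

theorem IsTournament.eq_of_not_adj {E : V → V → Prop} (hT : IsTournament E) {a b : V}
    (hab : ¬ E a b) (hba : ¬ E b a) : a = b := by
  by_contra hne
  exact hab ((hT.2 a b hne).2 hba)

/-- If arcs never decrease `f`, every cycle stays inside one fibre of `f`. -/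
theorem Acyclic.of_monotone {α : Type*} [PartialOrder α] {E : V → V → Prop} (f : V → α)
    (hf : ∀ a b, E a b → f a ≤ f b)
    (hfib : ∀ c, Acyclic fun a b => E a b ∧ f a = c ∧ f b = c) : Acyclic E := by
  have hf_path : ∀ a b, Relation.TransGen E a b → f a ≤ f b := by
    intro a b h
    induction h with
    | single h => exact hf _ _ h
    | tail _ h ih => exact ih.trans (hf _ _ h)
  intro v hv
  suffices key : ∀ b, Relation.TransGen E v b → f b ≤ f v →
      Relation.TransGen (fun a b => E a b ∧ f a = f v ∧ f b = f v) v b from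
    hfib (f v) v (key v hv le_rfl)
  intro b h
  induction h with
  | single h => exact fun hle => .single ⟨h, rfl, le_antisymm hle (hf _ _ h)⟩
  | @tail x b hvx hxb ih =>
    intro hle
    have hx : f x = f v := le_antisymm ((hf _ _ hxb).trans hle) (hf_path _ _ hvx)
    exact .tail (ih hx.le) ⟨hxb, hx, le_antisymm hle (hx ▸ hf _ _ hxb)⟩

section Neighborhoods

variable [Fintype V] [DecidableEq V] {E : V → V → Prop} [DecidableRel E] {p v : V}

@[simp]
theorem mem_Nin : v ∈ Nin E p ↔ E v p := by
  simp [Nin]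

@[simp]
theorem mem_Nout : v ∈ Nout E p ↔ E p v := by
  simp [Nout]

end Neighborhoods

/-- The layer of a vertex in the partition `N⁻(p), {p}, N⁺(p)` of a tournament. -/
def inOutLevel (E : V → V → Prop) [DecidableRel E] (p v : V) : ℕ :=
  if E v p then 0 else if E p v then 2 else 1

section Level

variable {E : V → V → Prop} [DecidableRel E] {p : V}

theorem inOutLevel_eq_zero_iff {v : V} : inOutLevel E p v = 0 ↔ E v p := by
  unfold inOutLevel
  split_ifs <;> simp_all

theorem inOutLevel_eq_two_iff (hT : IsTournament E) {v : V} : inOutLevel E p v = 2 ↔ E p v := by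
  unfold inOutLevel
  split_ifs with h1 h2
  · simpa using hT.asymm h1
  · simpa
  · simpa

theorem eq_of_inOutLevel_eq (hT : IsTournament E) {v : V} {c : ℕ} (hv : inOutLevel E p v = c)
    (h0 : c ≠ 0) (h2 : c ≠ 2) : v = p := by
  unfold inOutLevel at hv
  split_ifs at hv with h1 h3
  · exact absurd hv.symm h0
  · exact absurd hv.symm h2
  · exact hT.eq_of_not_adj h1 h3

theorem inOutLevel_le_of_adj (hT : IsTournament E) (hno : ∀ x y, E p x → E y p → ¬ E x y)
    {a b : V} (hab : E a b) : inOutLevel E p a ≤ inOutLevel E p b := by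
  by_cases hap : E a p
  · simp [inOutLevel, hap]
  have hbp : ¬ E b p := by
    by_cases hpa : E p a
    · exact fun hbp => hno a b hpa hbp hab
    · rw [hT.eq_of_not_adj hap hpa] at hab
      exact hT.asymm hab
  have hpb : E p b := by
    by_contra hpb
    rw [hT.eq_of_not_adj hbp hpb] at hab
    exact hap hab
  simp only [inOutLevel, hap, hbp, hpb, if_false, if_true]
  split_ifs <;> omega

end Level

/-- If there is no arc from `N⁺(p)` to `N⁻(p)`, then the union of an FVS of
`G[N⁻(p)]` and an FVS of `G[N⁺(p)]` is a `p`-disjoint FVS of `G`. -/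
theorem stmt17 [Fintype V] [DecidableEq V] (E : V → V → Prop) [DecidableRel E]
    (hT : IsTournament E) (p : V)
    (hno : ∀ x y, E p x → E y p → ¬ E x y)
    (Sm Sp : Finset V) (hSm : Sm ⊆ Nin E p) (hSp : Sp ⊆ Nout E p)
    (hm : IsFVS (Induce E (Nin E p)) Sm) (hp2 : IsFVS (Induce E (Nout E p)) Sp) :
    IsPDisjFVS E p (Sm ∪ Sp) := by
  refine ⟨Acyclic.of_monotone (inOutLevel E p)
    (fun a b hab => inOutLevel_le_of_adj hT hno hab.2.2) fun c => ?_, ?_⟩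
  · by_cases h0 : c = 0
    · refine hm.mono ?_
      rintro a b ⟨⟨ha, hb, hab⟩, hfa, hfb⟩
      simp_all [Delete, Induce, inOutLevel_eq_zero_iff]
    by_cases h2 : c = 2
    · refine hp2.mono ?_
      rintro a b ⟨⟨ha, hb, hab⟩, hfa, hfb⟩
      simp_all [Delete, Induce, inOutLevel_eq_two_iff hT]
    intro v hv
    obtain ⟨b, ⟨⟨-, -, hvb⟩, hv, hb⟩, -⟩ := Relation.TransGen.head'_iff.1 hv
    rw [eq_of_inOutLevel_eq hT hv h0 h2, eq_of_inOutLevel_eq hT hb h0 h2] at hvb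
    exact hT.1 p hvb
  · rw [mem_union, not_or]
    exact ⟨fun h => hT.1 p (mem_Nin.1 (hSm h)), fun h => hT.1 p (mem_Nout.1 (hSp h))⟩
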